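/- arXiv:1706.04065 — 4 statements merged into one kernel-verified Lean document; each statement's English description precedes it below -/
import Mathlib

section
/- Let U be a finite set and let α and β be two fixed-point-free involutions of U. For every element e of U, if v is the orbit of e under the subgroup generated by α and β, then there exists a positive integer k with |v| = 2k and (β ∘ α)^k(e) = e, and the orbit v consists exactly of the elements e, α(e), (β∘α)(e), (α∘β∘α)(e), …, i.e., the elements (β∘α)^i(e) and (α∘(β∘α)^i)(e) for 0 ≤ i < k. -/
def FPF {F : Type*} (π : Equiv.Perm F) : Prop := π * π = 1 ∧ ∀ x, π x ≠ x

def orbSet {F : Type*} (S : Set (Equiv.Perm F)) (x : F) : Set F :=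
  MulAction.orbit (Subgroup.closure S) x

noncomputable def orbCount {F : Type*} (S : Set (Equiv.Perm F)) : ℕ :=
  Nat.card (MulAction.orbitRel.Quotient (Subgroup.closure S) F)

noncomputable def genus {F : Type*} (θ σ' φ' : Equiv.Perm F) : ℤ :=
  (orbCount {θ, σ'} : ℤ) - orbCount {σ', φ'} - orbCount {θ, φ'} + 2 * orbCount {θ, σ', φ'}

def IsGraphEmb {F : Type*} (θ σ' φ' : Equiv.Perm F) : Prop :=
  FPF θ ∧ FPF σ' ∧ FPF φ' ∧ ∀ x : F, Nat.card (orbSet {θ, σ'} x) = 4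

def IsEdgeDeletion {F : Type*} (σ' φ' : Equiv.Perm F) (e : Set F)
    (θ₀ σ₀ φ₀ : Equiv.Perm {f : F // f ∉ e}) (θ : Equiv.Perm F) : Prop :=
  (∀ a : {f : F // f ∉ e}, (θ₀ a : F) = θ a ∧ (σ₀ a : F) = σ' a) ∧
  (∀ a : {f : F // f ∉ e}, ∃ m : ℕ,
     ((φ' * σ') ^ m) (φ' a) ∉ e ∧ (∀ j < m, ((φ' * σ') ^ j) (φ' a) ∈ e) ∧
     (φ₀ a : F) = ((φ' * σ') ^ m) (φ' a))

/-!
Put `γ = β * α` and let `O` be the orbit of `e` under `⟨γ⟩`, a cycle of length the minimal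
period `k` of `e` under `γ`. Since `α² = β² = 1` we have `β = α γ⁻¹`, so `O ∪ α O` is stable
under `α` and `β` and is therefore the whole orbit of `e`. The two halves are disjoint: from
`α z = γⁿ z` and the dihedral relation `α γᵗ = γ⁻ᵗ α`, the point `γᵗ z` is fixed by `α` when
`n = 2t`, and `α γᵗ z` is fixed by `β` when `n = 2t + 1`.
-/

open MulAction Subgroup Function Pointwise

section ZPowersOrbit

variable {G X : Type*} [Group G] [MulAction G X]

theorem orbit_mono {H K : Subgroup G} (hHK : H ≤ K) (x : X) : orbit H x ⊆ orbit K x := by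
  rintro _ ⟨⟨g, hg⟩, rfl⟩
  exact ⟨⟨g, hHK hg⟩, rfl⟩

theorem smul_orbit_of_mem {H : Subgroup G} {g : G} (hg : g ∈ H) (x : X) :
    g • orbit H x = orbit H x :=
  smul_orbit (⟨g, hg⟩ : H) x

theorem card_orbit_zpowers (g : G) (x : X) :
    Nat.card (orbit (zpowers g) x) = minimalPeriod (g • ·) x := by
  rw [Nat.card_congr (orbitZPowersEquiv g x), Nat.card_zmod]

theorem orbit_zpowers_eq_image_Iio (g : G) (x : X) (hx : 0 < minimalPeriod (g • ·) x) :
    orbit (zpowers g) x = (fun i : ℕ => g ^ i • x) '' Set.Iio (minimalPeriod (g • ·) x) := by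
  apply Set.Subset.antisymm
  · rintro _ ⟨⟨_, n, rfl⟩, rfl⟩
    have hk : (0 : ℤ) < minimalPeriod (g • ·) x := by exact_mod_cast hx
    have h0 := Int.emod_nonneg n hk.ne'
    refine ⟨(n % _).toNat, (Int.toNat_lt h0).mpr (Int.emod_lt_of_pos n hk), ?_⟩
    change g ^ _ • x = g ^ n • x
    rw [← zpow_natCast, Int.toNat_of_nonneg h0, zpow_smul_mod_minimalPeriod]
  · rintro _ ⟨i, -, rfl⟩
    exact ⟨⟨g ^ i, pow_mem (mem_zpowers g) i⟩, rfl⟩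

end ZPowersOrbit

section Dihedral

variable {G X : Type*} [Group G] [MulAction G X] {a b : G}

theorem mul_zpow_eq_zpow_neg_mul (ha : a * a = 1) (hb : b * b = 1) (n : ℤ) :
    a * (b * a) ^ n = (b * a) ^ (-n) * a := by
  have hconj : a * (b * a) * a⁻¹ = (b * a)⁻¹ := by
    rw [mul_inv_rev, inv_eq_of_mul_eq_one_right ha, inv_eq_of_mul_eq_one_right hb, mul_assoc,
      mul_assoc, ha, mul_one]
  calc a * (b * a) ^ n = (a * (b * a) * a⁻¹) ^ n * a := by rw [conj_zpow]; group
    _ = (b * a) ^ (-n) * a := by rw [hconj, inv_zpow']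

theorem orbit_closure_pair_eq_union (ha : a * a = 1) (hb : b * b = 1) (x : X) :
    orbit (closure {a, b}) x = orbit (zpowers (b * a)) x ∪ a • orbit (zpowers (b * a)) x := by
  set O := orbit (zpowers (b * a)) x
  have ha_stab : a • (O ∪ a • O) = O ∪ a • O := by
    rw [Set.smul_set_union, smul_smul, ha, one_smul, Set.union_comm]
  have hb_stab : b • (O ∪ a • O) = O ∪ a • O := by
    have hb' : b = a * (b * a)⁻¹ := by
      rw [mul_inv_rev, inv_eq_of_mul_eq_one_right ha, ← mul_assoc, ha, one_mul,
        inv_eq_of_mul_eq_one_right hb]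
    have hO : (b * a) • O = O := smul_orbit_of_mem (mem_zpowers _) x
    have hO' : (b * a)⁻¹ • O = O := smul_orbit_of_mem (inv_mem (mem_zpowers _)) x
    rw [Set.smul_set_union, smul_smul, hO, hb', mul_smul, hO', Set.union_comm]
  have hle : closure {a, b} ≤ stabilizer G (O ∪ a • O) := by
    rw [closure_le]
    rintro g (rfl | rfl)
    exacts [ha_stab, hb_stab]
  have ha_mem : a ∈ closure {a, b} := subset_closure (by simp)
  have hzpowers : zpowers (b * a) ≤ closure {a, b} :=
    zpowers_le.mpr (mul_mem (subset_closure (by simp)) ha_mem)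
  apply Set.Subset.antisymm
  · rintro _ ⟨⟨g, hg⟩, rfl⟩
    rw [← hle hg]
    exact Set.smul_mem_smul_set (Or.inl (mem_orbit_self x))
  · refine Set.union_subset (orbit_mono hzpowers x) ?_
    rw [← smul_orbit_of_mem ha_mem x]
    exact Set.smul_set_mono (orbit_mono hzpowers x)

theorem smul_notMem_orbit_zpowers (ha : a * a = 1) (hb : b * b = 1) (hfa : ∀ y : X, a • y ≠ y)
    (hfb : ∀ y : X, b • y ≠ y) (x : X) : a • x ∉ orbit (zpowers (b * a)) x := by
  rintro ⟨⟨_, n, rfl⟩, hn⟩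
  have hflip : ∀ t : ℤ, a • (b * a) ^ t • x = (b * a) ^ (-t) • a • x := fun t => by
    rw [smul_smul, mul_zpow_eq_zpow_neg_mul ha hb, mul_smul]
  replace hn : (b * a) ^ n • x = a • x := hn
  obtain ⟨t, rfl | rfl⟩ := Int.even_or_odd' n
  · apply hfa ((b * a) ^ t • x)
    rw [hflip, ← hn, smul_smul, ← zpow_add]
    congr 2; ring
  · apply hfb (a • (b * a) ^ t • x)
    rw [smul_smul, smul_smul, hflip, ← hn, smul_smul, ← zpow_add, ← zpow_one_add]
    congr 2; ring

theorem disjoint_orbit_zpowers_smul (ha : a * a = 1) (hb : b * b = 1)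
    (hfa : ∀ y : X, a • y ≠ y) (hfb : ∀ y : X, b • y ≠ y) (x : X) :
    Disjoint (orbit (zpowers (b * a)) x) (a • orbit (zpowers (b * a)) x) := by
  rw [Set.disjoint_left]
  rintro _ hy ⟨z, hz, rfl⟩
  rw [← orbit_eq_iff.mpr hz] at hy
  exact smul_notMem_orbit_zpowers ha hb hfa hfb z hy

theorem card_orbit_closure_pair [Finite X] (ha : a * a = 1) (hb : b * b = 1)
    (hfa : ∀ y : X, a • y ≠ y) (hfb : ∀ y : X, b • y ≠ y) (x : X) :
    Nat.card (orbit (closure {a, b}) x) = 2 * minimalPeriod ((b * a) • ·) x := by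
  rw [orbit_closure_pair_eq_union ha hb, Nat.card_coe_set_eq,
    Set.ncard_union_eq (disjoint_orbit_zpowers_smul ha hb hfa hfb x), Set.ncard_smul_set,
    ← Nat.card_coe_set_eq, card_orbit_zpowers]
  ring

end Dihedral

theorem stmt1 {U : Type*} [Fintype U]
    (α β : Equiv.Perm U) (hα : FPF α) (hβ : FPF β) (e : U) :
    ∃ k : ℕ, 0 < k ∧ Nat.card (orbSet {α, β} e) = 2 * k ∧
      ((β * α) ^ k) e = e ∧
      orbSet {α, β} e =
        {f : U | ∃ i < k, f = ((β * α) ^ i) e ∨ f = α (((β * α) ^ i) e)} := by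
  have hk : 0 < minimalPeriod ((β * α) • ·) e := Nat.pos_of_neZero _
  refine ⟨_, hk, card_orbit_closure_pair hα.1 hβ.1 hα.2 hβ.2 e,
    pow_smul_eq_iff_minimalPeriod_dvd.mpr (dvd_refl (minimalPeriod ((β * α) • ·) e)), ?_⟩
  rw [orbSet, orbit_closure_pair_eq_union hα.1 hβ.1, orbit_zpowers_eq_image_Iio _ _ hk]
  ext f
  simp [Set.mem_smul_set, Equiv.Perm.smul_def, eq_comm, and_or_left, exists_or]
end

section
/- Let U be a finite set and α, β two fixed-point-free involutions of U, and let e ∈ U with orbit v under ⟨α,β⟩. Define the permutation o_e of U by: o_e(f) = α(f) if f = (β∘α)^i(e) for some i ≥ 0; o_e(f) = β(f) if f = α((β∘α)^i(e)) for some i ≥ 0; and o_e(f) = f if f ∉ v. Then o_e is a well-defined permutation of U whose unique nontrivial orbit is exactly v. -/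
/-! Write `c = β * α`. Both `α` and `β` conjugate `c` to `c⁻¹`, so they permute the `⟨c⟩`-orbits,
and the `⟨α, β⟩`-orbit of `e` is the union of the `⟨c⟩`-orbits `A` of `e` and `B` of `α e`.
These are disjoint: `c ^ (2 * i) * α` and `c ^ (2 * i + 1) * α` are the conjugates of `α` and `β`
by `c ^ i`, so no `c ^ k * α` has a fixed point. Gluing `α` on `A`, `β` on `B` and the identity
elsewhere gives a permutation `o` with `o ∘ o = c` on `A`, so the `⟨o⟩`-orbit of `e` contains `A`,
and `B = o '' A`. -/

open Equiv Equiv.Perm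

section Orbits

variable {F : Type*}

theorem mem_orbSet_singleton_iff (σ : Perm F) (x y : F) :
    y ∈ orbSet {σ} x ↔ σ.SameCycle x y := by
  simp only [orbSet, ← Subgroup.zpowers_eq_closure, MulAction.mem_orbit_iff,
    Subtype.exists, Subgroup.mem_zpowers_iff]
  constructor
  · rintro ⟨_, ⟨i, rfl⟩, h⟩
    exact ⟨i, h⟩
  · rintro ⟨i, h⟩
    exact ⟨_, ⟨i, rfl⟩, h⟩

theorem orbSet_subset_of_forall_apply_mem_iff {S : Set (Perm F)} {s : Set F}
    (hS : ∀ g ∈ S, ∀ y, g y ∈ s ↔ y ∈ s) {x : F} (hx : x ∈ s) : orbSet S x ⊆ s := by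
  let H : Subgroup (Perm F) :=
    { carrier := {g | ∀ y, g y ∈ s ↔ y ∈ s}
      one_mem' := fun _ => Iff.rfl
      mul_mem' := fun hg hh y => (hg _).trans (hh y)
      inv_mem' := fun {g} hg y => by simpa using (hg (g⁻¹ y)).symm }
  rintro _ ⟨⟨g, hg⟩, rfl⟩
  exact ((Subgroup.closure_le H).mpr hS hg x).mpr hx

theorem Equiv.Perm.SameCycle.of_apply_apply_eq [Finite F] {σ τ : Perm F} {s : Set F}
    (hτ : ∀ x ∈ s, τ x ∈ s) (hστ : ∀ x ∈ s, σ (σ x) = τ x) {x y : F} (hx : x ∈ s)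
    (hxy : τ.SameCycle x y) : σ.SameCycle x y := by
  obtain ⟨n, rfl⟩ := hxy.exists_nat_pow_eq
  clear hxy
  suffices (τ ^ n) x ∈ s ∧ σ.SameCycle x ((τ ^ n) x) from this.2
  induction n with
  | zero => exact ⟨hx, SameCycle.refl _ _⟩
  | succ n ih =>
    rw [pow_succ', Perm.mul_apply, ← hστ _ ih.1]
    exact ⟨hστ _ ih.1 ▸ hτ _ ih.1, sameCycle_apply_right.2 (sameCycle_apply_right.2 ih.2)⟩

theorem Equiv.Perm.sameCycle_apply_apply_iff_of_conj_eq_inv {f g : Perm F}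
    (h : g * f * g⁻¹ = f⁻¹) {x y : F} : f.SameCycle (g x) (g y) ↔ f.SameCycle x y := by
  rw [← sameCycle_inv, ← h, sameCycle_conj]
  simp only [coe_inv, symm_apply_apply]

end Orbits

section Involutions

variable {G : Type*} [Group G]

theorem conj_eq_inv_of_mul_self_eq_one {g c : G} (hg : g * g = 1) (hgc : g * c * (g * c) = 1) :
    g * c * g⁻¹ = c⁻¹ := by
  rw [inv_eq_of_mul_eq_one_right hg, eq_inv_iff_mul_eq_one, mul_assoc, mul_assoc, ← mul_assoc g,
    hgc]

theorem mul_zpow_eq_zpow_neg_mul_of_conj_eq_inv {g c : G} (h : g * c * g⁻¹ = c⁻¹) (k : ℤ) :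
    g * c ^ k = c ^ (-k) * g := by
  rw [← mul_inv_eq_iff_eq_mul, ← conj_zpow, h, inv_zpow']

end Involutions

namespace Equiv.Perm

variable {F : Type*}

open scoped Classical in
noncomputable def alternate (α β : Perm F) (A B : Set F)
    (hα : Function.Involutive α) (hβ : Function.Involutive β)
    (hαA : ∀ x, α x ∈ B ↔ x ∈ A) (hβB : ∀ x, β x ∈ A ↔ x ∈ B)
    (hAB : _root_.Disjoint A B) : Perm F where
  toFun x := if x ∈ A then α x else if x ∈ B then β x else x
  invFun x := if x ∈ B then α x else if x ∈ A then β x else x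
  left_inv x := by
    by_cases hA : x ∈ A
    · simp [hA, (hαA x).2 hA, hα x]
    · by_cases hB : x ∈ B
      · simp [hA, hB, (hβB x).2 hB, hAB.notMem_of_mem_left ((hβB x).2 hB), hβ x]
      · simp [hA, hB]
  right_inv x := by
    have hαB : α x ∈ A ↔ x ∈ B := by simpa [hα x] using (hαA (α x)).symm
    have hβA : β x ∈ B ↔ x ∈ A := by simpa [hβ x] using (hβB (β x)).symm
    by_cases hB : x ∈ B
    · simp [hB, hαB.2 hB, hα x]
    · by_cases hA : x ∈ A
      · simp [hA, hB, hβA.2 hA, hAB.notMem_of_mem_right (hβA.2 hA), hβ x]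
      · simp [hA, hB]

section Alternate

variable {α β : Perm F} {A B : Set F} {hα : Function.Involutive α}
  {hβ : Function.Involutive β} {hαA : ∀ x, α x ∈ B ↔ x ∈ A} {hβB : ∀ x, β x ∈ A ↔ x ∈ B}
  {hAB : _root_.Disjoint A B} {x : F}

theorem alternate_apply_of_mem_left (hx : x ∈ A) :
    alternate α β A B hα hβ hαA hβB hAB x = α x := by
  simp [alternate, hx]

theorem alternate_apply_of_mem_right (hx : x ∈ B) :
    alternate α β A B hα hβ hαA hβB hAB x = β x := by
  simp [alternate, hx, hAB.notMem_of_mem_right hx]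

theorem alternate_apply_of_notMem (hxA : x ∉ A) (hxB : x ∉ B) :
    alternate α β A B hα hβ hαA hβB hAB x = x := by
  simp [alternate, hxA, hxB]

theorem alternate_apply_mem_union_iff :
    alternate α β A B hα hβ hαA hβB hAB x ∈ A ∪ B ↔ x ∈ A ∪ B := by
  by_cases hxA : x ∈ A
  · simp [alternate_apply_of_mem_left hxA, (hαA x).2 hxA, hxA]
  by_cases hxB : x ∈ B
  · simp [alternate_apply_of_mem_right hxB, (hβB x).2 hxB, hxB]
  rw [alternate_apply_of_notMem hxA hxB]

end Alternate

end Equiv.Perm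

namespace FPF

variable {F : Type*} {α β : Perm F}

theorem involutive (hα : FPF α) : Function.Involutive α := fun x => by
  rw [← Perm.mul_apply, hα.1, Perm.one_apply]

theorem conj (hα : FPF α) (g : Perm F) : FPF (g * α * g⁻¹) := by
  refine ⟨?_, fun x hx => hα.2 (g⁻¹ x) ?_⟩
  · simp only [mul_assoc, inv_mul_cancel_left]
    rw [← mul_assoc α α, hα.1, one_mul, mul_inv_cancel]
  · simpa [← Equiv.eq_symm_apply] using hx

theorem conj_mul_self_left (hα : FPF α) (hβ : FPF β) : α * (β * α) * α⁻¹ = (β * α)⁻¹ :=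
  conj_eq_inv_of_mul_self_eq_one hα.1 (by
    simp only [mul_assoc]
    rw [← mul_assoc α α, hα.1, one_mul, ← mul_assoc β β, hβ.1, one_mul, hα.1])

theorem conj_mul_self_right (hα : FPF α) (hβ : FPF β) : β * (β * α) * β⁻¹ = (β * α)⁻¹ :=
  conj_eq_inv_of_mul_self_eq_one hβ.1 (by rw [← mul_assoc β β, hβ.1, one_mul, hα.1])

theorem zpow_mul (hα : FPF α) (hβ : FPF β) (k : ℤ) : FPF ((β * α) ^ k * α) := by
  have hcomm := mul_zpow_eq_zpow_neg_mul_of_conj_eq_inv (conj_mul_self_left hα hβ)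
  have hβ_eq : β = β * α * α := by rw [mul_assoc, hα.1, mul_one]
  set c := β * α
  obtain ⟨i, rfl | rfl⟩ := Int.even_or_odd' k
  · convert hα.conj (c ^ i) using 1
    rw [mul_assoc, ← zpow_neg, hcomm, neg_neg, ← mul_assoc, ← zpow_add, two_mul]
  · convert hβ.conj (c ^ i) using 1
    rw [hβ_eq, mul_assoc, mul_assoc, ← zpow_neg, hcomm, neg_neg, ← mul_assoc, ← mul_assoc,
      ← zpow_add_one, ← zpow_add]
    ring_nf

theorem not_sameCycle_apply (hα : FPF α) (hβ : FPF β) (x : F) :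
    ¬ (β * α).SameCycle x (α x) := by
  rintro ⟨k, hk⟩
  apply (hα.zpow_mul hβ k).2 (α x)
  rw [Perm.mul_apply, hα.involutive, hk]

theorem one_lt_card_orbSet_pair [Finite F] (hα : FPF α) (e : F) :
    1 < Nat.card (orbSet {α, β} e) := by
  rw [Nat.card_coe_set_eq, Set.one_lt_ncard_iff (Set.toFinite _)]
  exact ⟨e, α e, MulAction.mem_orbit_self e, ⟨⟨α, Subgroup.subset_closure (by simp)⟩, rfl⟩,
    (hα.2 e).symm⟩

theorem sameCycle_apply_apply_iff (hα : FPF α) (hβ : FPF β) {x y : F} :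
    (β * α).SameCycle (α x) (α y) ↔ (β * α).SameCycle x y :=
  sameCycle_apply_apply_iff_of_conj_eq_inv (conj_mul_self_left hα hβ)

theorem sameCycle_apply_iff_left (hα : FPF α) (hβ : FPF β) {x y : F} :
    (β * α).SameCycle x (α y) ↔ (β * α).SameCycle (α x) y := by
  rw [← hα.sameCycle_apply_apply_iff hβ, hα.involutive y]

theorem sameCycle_apply_iff_right (hα : FPF α) (hβ : FPF β) {x y : F} :
    (β * α).SameCycle x (β y) ↔ (β * α).SameCycle (α x) y := by
  have hβx : β x = (β * α) (α x) := by rw [Perm.mul_apply, hα.involutive]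
  rw [← sameCycle_apply_apply_iff_of_conj_eq_inv (conj_mul_self_right hα hβ), hβ.involutive y,
    hβx, sameCycle_apply_left]

noncomputable def alternatingCycle (hα : FPF α) (hβ : FPF β) (e : F) : Perm F :=
  alternate α β {x | (β * α).SameCycle e x} {x | (β * α).SameCycle (α e) x}
    hα.involutive hβ.involutive
    (fun _ => hα.sameCycle_apply_apply_iff hβ)
    (fun _ => hα.sameCycle_apply_iff_right hβ)
    (Set.disjoint_left.2 fun _ hx hx' => hα.not_sameCycle_apply hβ e (hx.trans hx'.symm))

theorem orbSet_pair_eq (hα : FPF α) (hβ : FPF β) (e : F) :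
    orbSet {α, β} e = {x | (β * α).SameCycle e x} ∪ {x | (β * α).SameCycle (α e) x} := by
  apply Set.Subset.antisymm
  · refine orbSet_subset_of_forall_apply_mem_iff ?_ (Or.inl (SameCycle.refl _ _))
    rintro g (rfl | rfl) y
    · simp only [Set.mem_union, Set.mem_ofPred_eq, hα.sameCycle_apply_iff_left hβ,
        hα.involutive e, or_comm]
    · simp only [Set.mem_union, Set.mem_ofPred_eq, hα.sameCycle_apply_iff_right hβ,
        hα.involutive e, or_comm]
  · have hα_mem : α ∈ Subgroup.closure {α, β} := Subgroup.subset_closure (by simp)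
    have hβ_mem : β ∈ Subgroup.closure {α, β} := Subgroup.subset_closure (by simp)
    have hc_mem := Subgroup.mul_mem _ hβ_mem hα_mem
    rintro x (⟨k, rfl⟩ | ⟨k, rfl⟩)
    · exact ⟨⟨_, Subgroup.zpow_mem _ hc_mem k⟩, rfl⟩
    · exact ⟨⟨_, Subgroup.mul_mem _ (Subgroup.zpow_mem _ hc_mem k) hα_mem⟩, rfl⟩

variable (hα : FPF α) (hβ : FPF β) {e x : F}

theorem alternatingCycle_apply_of_sameCycle (hx : (β * α).SameCycle e x) :
    hα.alternatingCycle hβ e x = α x :=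
  alternate_apply_of_mem_left hx

theorem alternatingCycle_apply_of_sameCycle_apply (hx : (β * α).SameCycle (α e) x) :
    hα.alternatingCycle hβ e x = β x :=
  alternate_apply_of_mem_right hx

theorem alternatingCycle_apply_of_notMem (hx : x ∉ orbSet {α, β} e) :
    hα.alternatingCycle hβ e x = x := by
  rw [orbSet_pair_eq hα hβ, Set.mem_union, not_or] at hx
  exact alternate_apply_of_notMem hx.1 hx.2

theorem alternatingCycle_apply_mem_iff :
    hα.alternatingCycle hβ e x ∈ orbSet {α, β} e ↔ x ∈ orbSet {α, β} e := by
  rw [orbSet_pair_eq hα hβ]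
  exact alternate_apply_mem_union_iff

theorem sameCycle_alternatingCycle_iff [Finite F] {y : F} :
    (hα.alternatingCycle hβ e).SameCycle e y ↔ y ∈ orbSet {α, β} e := by
  set o := hα.alternatingCycle hβ e
  constructor
  · intro h
    refine orbSet_subset_of_forall_apply_mem_iff (S := {o}) ?_ (MulAction.mem_orbit_self e)
      ((mem_orbSet_singleton_iff _ _ _).2 h)
    rintro g rfl z
    exact alternatingCycle_apply_mem_iff hα hβ
  have hsq : ∀ x, (β * α).SameCycle e x → o (o x) = (β * α) x := fun x hx => by
    rw [alternatingCycle_apply_of_sameCycle hα hβ hx,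
      alternatingCycle_apply_of_sameCycle_apply hα hβ
        ((hα.sameCycle_apply_iff_left hβ).2 (by rwa [hα.involutive]))]
    rfl
  have hA_sub : ∀ x, (β * α).SameCycle e x → o.SameCycle e x := fun x hx =>
    SameCycle.of_apply_apply_eq (s := {x | (β * α).SameCycle e x})
      (fun _ hz => sameCycle_apply_right.2 hz) hsq (SameCycle.refl _ _) hx
  rw [orbSet_pair_eq hα hβ]
  rintro (hy | hy)
  · exact hA_sub y hy
  · have hαy : (β * α).SameCycle e (α y) := (hα.sameCycle_apply_iff_left hβ).2 hy
    have := sameCycle_apply_right.2 (hA_sub _ hαy)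
    rwa [alternatingCycle_apply_of_sameCycle hα hβ hαy, hα.involutive] at this

theorem orbSet_alternatingCycle_of_mem [Finite F] (hx : x ∈ orbSet {α, β} e) :
    orbSet {hα.alternatingCycle hβ e} x = orbSet {α, β} e := by
  have hex := (hα.sameCycle_alternatingCycle_iff hβ).2 hx
  ext y
  rw [mem_orbSet_singleton_iff, ← hα.sameCycle_alternatingCycle_iff hβ]
  exact ⟨hex.trans, hex.symm.trans⟩

theorem orbSet_alternatingCycle_of_notMem (hx : x ∉ orbSet {α, β} e) :
    orbSet {hα.alternatingCycle hβ e} x = {x} := by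
  ext y
  rw [mem_orbSet_singleton_iff, Set.mem_singleton_iff]
  refine ⟨fun h => (h.eq_of_left ?_).symm, fun h => h ▸ SameCycle.refl _ _⟩
  exact hα.alternatingCycle_apply_of_notMem hβ hx

end FPF

theorem stmt2 {U : Type*} [Fintype U]
    (α β : Equiv.Perm U) (hα : FPF α) (hβ : FPF β) (e : U) :
    ∃ o : Equiv.Perm U,
      (∀ f : U, (∃ i : ℕ, f = ((β * α) ^ i) e) → o f = α f) ∧
      (∀ f : U, (∃ i : ℕ, f = α (((β * α) ^ i) e)) → o f = β f) ∧
      (∀ f : U, f ∉ orbSet {α, β} e → o f = f) ∧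
      (∀ f : U, 1 < Nat.card (orbSet ({o} : Set (Equiv.Perm U)) f) ↔ f ∈ orbSet {α, β} e) ∧
      (∀ f : U, f ∈ orbSet {α, β} e → orbSet ({o} : Set (Equiv.Perm U)) f = orbSet {α, β} e) := by
  have hcycle : ∀ i : ℕ, (β * α).SameCycle e (((β * α) ^ i) e) := fun i =>
    sameCycle_pow_right.2 (SameCycle.refl _ _)
  refine ⟨hα.alternatingCycle hβ e, ?_, ?_, fun f => hα.alternatingCycle_apply_of_notMem hβ,
    fun f => ?_, fun f => hα.orbSet_alternatingCycle_of_mem hβ⟩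
  · rintro f ⟨i, rfl⟩
    exact hα.alternatingCycle_apply_of_sameCycle hβ (hcycle i)
  · rintro f ⟨i, rfl⟩
    exact hα.alternatingCycle_apply_of_sameCycle_apply hβ
      ((hα.sameCycle_apply_apply_iff hβ).2 (hcycle i))
  by_cases hf : f ∈ orbSet {α, β} e
  · simpa [hf, hα.orbSet_alternatingCycle_of_mem hβ hf] using hα.one_lt_card_orbSet_pair e
  · simp [hf, hα.orbSet_alternatingCycle_of_notMem hβ hf]
end

section
/- The genus of any graph embedding is nonnegative; that is, for any graph embedding E, #edges(E) − #vertices(E) − #faces(E) + 2·#components(E) ≥ 0. -/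
open Module MulAction Pointwise

lemma finrank_add_finrank_le_of_dotProduct_eq_zero {ι K : Type*} [Fintype ι] [Field K]
    {A B : Submodule K (ι → K)} (h : ∀ a ∈ A, ∀ b ∈ B, a ⬝ᵥ b = 0) :
    finrank K A + finrank K B ≤ Fintype.card ι := by
  let β : LinearMap.BilinForm K (ι → K) := dotProductBilin K K
  have hβ : β.Nondegenerate := ⟨fun v hv => dotProduct_eq_zero_iff.mp hv,
    fun w hw => dotProduct_eq_zero_iff.mp fun v => (dotProduct_comm w v).trans (hw v)⟩
  have hB : B ≤ β.orthogonal A := fun b hb a ha => h a ha b hb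
  have := LinearMap.BilinForm.finrank_orthogonal hβ A
  have := Submodule.finrank_mono hB
  have := Submodule.finrank_le A
  simp only [Module.finrank_fintype_fun_eq_card] at *
  omega

theorem FPF.apply_apply {F : Type*} {π : Equiv.Perm F} (h : FPF π) (x : F) : π (π x) = x :=
  DFunLike.congr_fun h.1 x

namespace GraphEmbedding

variable {F : Type*}

abbrev Orbits (S : Set (Equiv.Perm F)) : Type _ :=
  orbitRel.Quotient (Subgroup.closure S) F

def invariants (S : Set (Equiv.Perm F)) : Submodule (ZMod 2) (F → ZMod 2) where
  carrier := {u | ∀ π ∈ S, ∀ x, u (π x) = u x}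
  add_mem' hu hv π hπ x := by simp only [Pi.add_apply, hu π hπ x, hv π hπ x]
  zero_mem' _ _ _ := rfl
  smul_mem' c u hu π hπ x := by simp only [Pi.smul_apply, hu π hπ x]

section Invariants

variable {S : Set (Equiv.Perm F)} {u : F → ZMod 2}

@[simp]
lemma mem_invariants : u ∈ invariants S ↔ ∀ π ∈ S, ∀ x, u (π x) = u x := Iff.rfl

lemma apply_eq_of_mem_closure (hu : u ∈ invariants S) {g : Equiv.Perm F}
    (hg : g ∈ Subgroup.closure S) (x : F) : u (g x) = u x := by
  induction hg using Subgroup.closure_induction generalizing x with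
  | mem π hπ => exact hu π hπ x
  | one => rfl
  | mul a b _ _ iha ihb => exact (iha (b x)).trans (ihb x)
  | inv a _ ih => simpa using (ih (a⁻¹ x)).symm

lemma apply_eq_of_mem_invariants (hu : u ∈ invariants S) {x y : F}
    (hxy : (Quotient.mk'' x : Orbits S) = Quotient.mk'' y) : u x = u y := by
  obtain ⟨⟨g, hg⟩, rfl⟩ := Quotient.exact' hxy
  exact apply_eq_of_mem_closure hu hg y

lemma comp_mk_mem_invariants (v : Orbits S → ZMod 2) :
    (fun x => v (Quotient.mk'' x)) ∈ invariants S := fun π hπ _ =>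
  congrArg v (Quotient.sound' ⟨⟨π, Subgroup.subset_closure hπ⟩, rfl⟩)

variable (S) in
noncomputable def restrictReps : (F → ZMod 2) →ₗ[ZMod 2] (Orbits S → ZMod 2) :=
  LinearMap.funLeft (ZMod 2) (ZMod 2) Quotient.out

lemma eq_zero_of_restrictReps_eq_zero (hu : u ∈ invariants S) (h : restrictReps S u = 0) :
    u = 0 := by
  funext x
  rw [apply_eq_of_mem_invariants hu (Quotient.out_eq' (Quotient.mk'' x : Orbits S)).symm]
  exact congrFun h _

lemma finrank_map_restrictReps {A : Submodule (ZMod 2) (F → ZMod 2)}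
    (hA : A ≤ invariants S) : finrank (ZMod 2) (A.map (restrictReps S)) = finrank (ZMod 2) A := by
  rw [← LinearMap.range_domRestrict]
  refine LinearMap.finrank_range_of_inj ((injective_iff_map_eq_zero _).mpr fun u hu => ?_)
  exact Subtype.ext (eq_zero_of_restrictReps_eq_zero (hA u.2) hu)

lemma finrank_invariants [Finite F] (S : Set (Equiv.Perm F)) :
    finrank (ZMod 2) (invariants S) = orbCount S := by
  have : Fintype (Orbits S) := Fintype.ofFinite _
  have hsurj : Function.Surjective ((restrictReps S).domRestrict (invariants S)) := fun v =>
    ⟨⟨_, comp_mk_mem_invariants v⟩, funext fun q => congrArg v (Quotient.out_eq' q)⟩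
  have hinj : Function.Injective ((restrictReps S).domRestrict (invariants S)) :=
    (injective_iff_map_eq_zero _).mpr fun u hu =>
      Subtype.ext (eq_zero_of_restrictReps_eq_zero u.2 hu)
  rw [(LinearEquiv.ofBijective _ ⟨hinj, hsurj⟩).finrank_eq, Module.finrank_pi, orbCount,
    Nat.card_eq_fintype_card]

end Invariants

def diffAlong (π : Equiv.Perm F) : (F → ZMod 2) →ₗ[ZMod 2] (F → ZMod 2) :=
  LinearMap.id + LinearMap.funLeft (ZMod 2) (ZMod 2) π

lemma diffAlong_apply (π : Equiv.Perm F) (u : F → ZMod 2) (x : F) :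
    diffAlong π u x = u x + u (π x) := rfl

lemma invariants_insert (π : Equiv.Perm F) (S : Set (Equiv.Perm F)) :
    invariants (insert π S) = invariants S ⊓ LinearMap.ker (diffAlong π) := by
  ext u
  rw [Submodule.mem_inf, LinearMap.mem_ker, mem_invariants, Set.forall_mem_insert, and_comm,
    funext_iff]
  refine and_congr_right' (forall_congr' fun x => ?_)
  rw [diffAlong_apply, Pi.zero_apply, CharTwo.add_eq_zero, eq_comm]

lemma finrank_invariants_eq_finrank_map_add [Finite F] (π : Equiv.Perm F)
    (S : Set (Equiv.Perm F)) :
    finrank (ZMod 2) (invariants S) =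
      finrank (ZMod 2) ((invariants S).map (diffAlong π)) +
        finrank (ZMod 2) (invariants (insert π S)) := by
  have hker : LinearMap.ker ((diffAlong π).domRestrict (invariants S)) =
      (invariants (insert π S)).comap (invariants S).subtype := by
    rw [LinearMap.ker_domRestrict, invariants_insert, Submodule.comap_inf,
      Submodule.comap_subtype_self, top_inf_eq]
  rw [← LinearMap.range_domRestrict,
    ← ((diffAlong π).domRestrict (invariants S)).finrank_range_add_finrank_ker, hker,
    (Submodule.comapSubtypeEquivOfLe ((invariants_insert π S).trans_le inf_le_left)).finrank_eq]

lemma finrank_add_finrank_le_orbCount {S : Set (Equiv.Perm F)} [Fintype (Orbits S)]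
    {A B : Submodule (ZMod 2) (F → ZMod 2)} (hA : A ≤ invariants S) (hB : B ≤ invariants S)
    (h : ∀ u ∈ A, ∀ w ∈ B, restrictReps S u ⬝ᵥ restrictReps S w = 0) :
    finrank (ZMod 2) A + finrank (ZMod 2) B ≤ orbCount S := by
  rw [← finrank_map_restrictReps hA, ← finrank_map_restrictReps hB, orbCount,
    Nat.card_eq_fintype_card]
  refine finrank_add_finrank_le_of_dotProduct_eq_zero ?_
  rintro _ ⟨u, hu, rfl⟩ _ ⟨w, hw, rfl⟩
  exact h u hu w hw

lemma orbSet_subset {S : Set (Equiv.Perm F)} {T : Set F} (hT : T.Finite)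
    (hS : ∀ π ∈ S, π '' T ⊆ T) {x : F} (hx : x ∈ T) : orbSet S x ⊆ T := by
  have hle : Subgroup.closure S ≤ stabilizer (Equiv.Perm F) T := (Subgroup.closure_le _).mpr
    fun π hπ => (mem_stabilizer_set_iff_smul_set_subset hT).mpr (hS π hπ)
  rintro _ ⟨⟨g, hg⟩, rfl⟩
  exact (hle hg).symm ▸ Set.smul_mem_smul_set hx

section EdgeOrbits

variable {θ σ : Equiv.Perm F}

lemma apply_ne_apply (hθ : FPF θ) (hσ : FPF σ) (h4 : ∀ x, Nat.card (orbSet {θ, σ} x) = 4)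
    (x : F) : θ x ≠ σ x := by
  intro h
  have hσθ : σ (θ x) = x := by rw [h, hσ.apply_apply]
  have hsub : orbSet {θ, σ} x ⊆ {x, θ x} := by
    refine orbSet_subset (Set.toFinite _) ?_ (Set.mem_insert x _)
    rintro π (rfl | rfl)
    · rw [Set.image_pair, hθ.apply_apply, Set.pair_comm]
    · rw [Set.image_pair, hσθ, ← h, Set.pair_comm]
  have hcard := Set.ncard_le_ncard hsub (Set.toFinite _)
  rw [← Nat.card_coe_set_eq, h4] at hcard
  have := Set.ncard_insert_le x {θ x}
  rw [Set.ncard_singleton] at this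
  omega

lemma nodup_edge (hθ : FPF θ) (hσ : FPF σ) (h4 : ∀ x, Nat.card (orbSet {θ, σ} x) = 4)
    (x : F) : [x, θ x, σ x, σ (θ x)].Nodup := by
  have h := apply_ne_apply hθ hσ h4 x
  simp only [List.nodup_cons, List.mem_cons, List.not_mem_nil, or_false, not_or,
    List.nodup_nil, and_true]
  exact ⟨⟨(hθ.2 x).symm, (hσ.2 x).symm,
    fun e => h ((congrArg σ e).trans (hσ.apply_apply _)).symm⟩,
    ⟨h, (hσ.2 (θ x)).symm⟩, fun e => hθ.2 x (σ.injective e).symm, not_false⟩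

lemma orbSet_eq [DecidableEq F] (hθ : FPF θ) (hσ : FPF σ)
    (h4 : ∀ x, Nat.card (orbSet {θ, σ} x) = 4) (x : F) :
    orbSet {θ, σ} x = ↑[x, θ x, σ x, σ (θ x)].toFinset := by
  have hsub : ↑[x, θ x, σ x, σ (θ x)].toFinset ⊆ orbSet {θ, σ} x := by
    have hθ' : θ ∈ Subgroup.closure {θ, σ} := Subgroup.subset_closure (Set.mem_insert _ _)
    have hσ' : σ ∈ Subgroup.closure {θ, σ} :=
      Subgroup.subset_closure (Set.mem_insert_of_mem _ rfl)
    intro y hy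
    simp only [Finset.mem_coe, List.mem_toFinset, List.mem_cons, List.not_mem_nil,
      or_false] at hy
    rcases hy with rfl | rfl | rfl | rfl
    · exact mem_orbit_self _
    · exact ⟨⟨θ, hθ'⟩, rfl⟩
    · exact ⟨⟨σ, hσ'⟩, rfl⟩
    · exact ⟨⟨σ * θ, Subgroup.mul_mem _ hσ' hθ'⟩, rfl⟩
  have hfin : (orbSet {θ, σ} x).Finite :=
    Set.finite_of_ncard_ne_zero (by rw [← Nat.card_coe_set_eq, h4]; norm_num)
  refine Set.eq_of_subset_of_ncard_le hsub ?_ hfin |>.symm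
  rw [← Nat.card_coe_set_eq, h4, Set.ncard_coe_finset,
    List.toFinset_card_of_nodup (nodup_edge hθ hσ h4 x)]
  rfl

lemma apply_comm (hθ : FPF θ) (hσ : FPF σ) (h4 : ∀ x, Nat.card (orbSet {θ, σ} x) = 4)
    (x : F) : θ (σ x) = σ (θ x) := by
  classical
  have hmem : θ (σ x) ∈ orbSet {θ, σ} x :=
    ⟨⟨θ * σ, Subgroup.mul_mem _ (Subgroup.subset_closure (Set.mem_insert _ _))
      (Subgroup.subset_closure (Set.mem_insert_of_mem _ rfl))⟩, rfl⟩
  rw [orbSet_eq hθ hσ h4 x] at hmem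
  simp only [Finset.mem_coe, List.mem_toFinset, List.mem_cons, List.not_mem_nil,
    or_false] at hmem
  rcases hmem with h | h | h | h
  · exact absurd ((congrArg θ h).symm.trans (hθ.apply_apply _)) (apply_ne_apply hθ hσ h4 x)
  · exact absurd (θ.injective h) (hσ.2 x)
  · exact absurd h (hθ.2 _)
  · exact h

end EdgeOrbits

lemma sum_fiber_edge [Fintype F] [DecidableEq F] {θ σ : Equiv.Perm F} (hθ : FPF θ)
    (hσ : FPF σ) (h4 : ∀ x, Nat.card (orbSet {θ, σ} x) = 4) [DecidableEq (Orbits {θ, σ})]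
    {M : Type*} [AddCommMonoid M] (f : F → M) (q : Orbits {θ, σ}) :
    ∑ y with (Quotient.mk'' y : Orbits {θ, σ}) = q, f y =
      f q.out + f (θ q.out) + f (σ q.out) + f (σ (θ q.out)) := by
  have hfiber : ({y | (Quotient.mk'' y : Orbits {θ, σ}) = q} : Finset F) =
      [q.out, θ q.out, σ q.out, σ (θ q.out)].toFinset := by
    ext y
    rw [Finset.mem_filter_univ, ← Finset.mem_coe, ← orbSet_eq hθ hσ h4]
    conv_lhs => rw [← Quotient.out_eq' q]
    exact Quotient.eq''.trans orbitRel_apply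
  rw [hfiber, List.sum_toFinset _ (nodup_edge hθ hσ h4 _)]
  simp only [List.map_cons, List.map_nil, List.sum_cons, List.sum_nil, add_zero, add_assoc]

lemma sum_eq_zero_of_apply_fpf [Fintype F] {φ : Equiv.Perm F} (hφ : FPF φ) {f : F → ZMod 2}
    (hf : ∀ x, f (φ x) = f x) : ∑ x, f x = 0 :=
  Finset.sum_involution (fun x _ => φ x) (fun x _ => by rw [hf, CharTwo.add_self_eq_zero])
    (fun x _ _ => hφ.2 x) (fun _ _ => Finset.mem_univ _) (fun x _ => hφ.apply_apply x)

lemma map_diffAlong_le_invariants {π ρ : Equiv.Perm F} {S : Set (Equiv.Perm F)}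
    (hπ : ∀ x, π (π x) = x) (hcomm : ∀ x, π (ρ x) = ρ (π x)) (hρ : ρ ∈ S) :
    (invariants S).map (diffAlong π) ≤ invariants {π, ρ} := by
  rintro _ ⟨u, hu, rfl⟩
  rintro _ (rfl | rfl) x
  · rw [diffAlong_apply, diffAlong_apply, hπ, add_comm]
  · rw [diffAlong_apply, diffAlong_apply, hcomm, hu _ hρ, hu _ hρ]

lemma restrictReps_diffAlong_dotProduct_eq_zero [Fintype F] {θ σ φ : Equiv.Perm F}
    [Fintype (Orbits {θ, σ})] (hθ : FPF θ) (hσ : FPF σ) (hφ : FPF φ)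
    (h4 : ∀ x, Nat.card (orbSet {θ, σ} x) = 4) {g k : F → ZMod 2}
    (hg : g ∈ invariants {σ, φ}) (hk : k ∈ invariants {θ, φ}) :
    restrictReps {θ, σ} (diffAlong θ g) ⬝ᵥ restrictReps {θ, σ} (diffAlong σ k) = 0 := by
  classical
  have hterm (q : Orbits {θ, σ}) : diffAlong θ g q.out * diffAlong σ k q.out =
      ∑ y with (Quotient.mk'' y : Orbits {θ, σ}) = q, g y * k y := by
    rw [sum_fiber_edge hθ hσ h4]
    set x := q.out
    have e1 : g (σ x) = g x := hg σ (Set.mem_insert _ _) x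
    have e2 : k (θ x) = k x := hk θ (Set.mem_insert _ _) x
    have e3 : g (σ (θ x)) = g (θ x) := hg σ (Set.mem_insert _ _) (θ x)
    have e4 : k (σ (θ x)) = k (σ x) := by
      rw [← apply_comm hθ hσ h4, hk θ (Set.mem_insert _ _)]
    rw [diffAlong_apply, diffAlong_apply, e1, e2, e3, e4]
    ring
  calc restrictReps {θ, σ} (diffAlong θ g) ⬝ᵥ restrictReps {θ, σ} (diffAlong σ k)
      = ∑ q : Orbits {θ, σ}, ∑ y with (Quotient.mk'' y : Orbits {θ, σ}) = q, g y * k y :=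
        Finset.sum_congr rfl fun q _ => hterm q
    _ = ∑ y, g y * k y := Finset.sum_fiberwise _ _ _
    _ = 0 := sum_eq_zero_of_apply_fpf hφ fun y => by
        rw [hg φ (Set.mem_insert_of_mem _ rfl), hk φ (Set.mem_insert_of_mem _ rfl)]

end GraphEmbedding

open GraphEmbedding in
theorem stmt8 {F : Type*} [Fintype F]
    (θ σ' φ' : Equiv.Perm F) (h : IsGraphEmb θ σ' φ') :
    0 ≤ genus θ σ' φ' := by
  classical
  obtain ⟨hθ, hσ, hφ, h4⟩ := h
  have hcomm := apply_comm hθ hσ h4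
  have hV := finrank_invariants_eq_finrank_map_add θ {σ', φ'}
  have hF := finrank_invariants_eq_finrank_map_add σ' {θ, φ'}
  have hE := finrank_add_finrank_le_orbCount
    (map_diffAlong_le_invariants hθ.apply_apply hcomm (Set.mem_insert _ _))
    (Set.pair_comm σ' θ ▸ map_diffAlong_le_invariants hσ.apply_apply (fun x => (hcomm x).symm)
      (Set.mem_insert _ _))
    (by
      rintro _ ⟨g, hg, rfl⟩ _ ⟨k, hk, rfl⟩
      exact restrictReps_diffAlong_dotProduct_eq_zero hθ hσ hφ h4 hg hk)
  rw [Set.insert_comm] at hF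
  simp only [finrank_invariants] at hV hF
  unfold genus
  omega
end

section
/- Edge deletion changes the orbit counts by bounded amounts: if E₀ = E − e for an edge e of a graph embedding E, then #edges(E) − #edges(E₀) = 1, #vertices(E) − #vertices(E₀) ∈ {0,1,2}, #faces(E) − #faces(E₀) ∈ {−1,0,1,2}, and #components(E) − #components(E₀) ∈ {−1,0,1}. -/
/-!
Away from the deleted edge `e` the new involutions agree with the old ones, except that `φ₀`
differs from `φ` at the points `p` with `φ p ∈ e`. So every orbit avoiding `e` survives as an
orbit, and each count drops by (old orbits meeting `e`) − (new orbits through a modified point).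
The edge `e` meets one orbit of edges and of components and at most two of vertices and of faces.
For `y ∈ e` the deletion joins `φ y` to `φ (σ y)`, so the modified points lie in at most two new
orbits; for vertices these even inject into the old orbits meeting `e`, because `σ₀ φ₀` is the
first-return map of the rotation `σ φ` to the complement of `e`.
-/

open MulAction Equiv Set

theorem Set.ncard_image_le_of_fiber {α β γ : Type*} {f : α → β} {g : α → γ} {s : Set α}
    (hs : s.Finite) (h : ∀ a ∈ s, ∀ b ∈ s, f a = f b → g a = g b) :
    (g '' s).ncard ≤ (f '' s).ncard := by
  classical
  rcases s.eq_empty_or_nonempty with rfl | ⟨a₀, -⟩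
  · simp
  have : Nonempty α := ⟨a₀⟩
  have hfactor : g '' s = (fun c => g (Function.invFunOn f s c)) '' (f '' s) := by
    rw [image_image]
    refine image_congr fun a ha => (h _ (Function.invFunOn_mem ⟨a, ha, rfl⟩) a ha ?_).symm
    exact Function.invFunOn_eq ⟨a, ha, rfl⟩
  rw [hfactor]
  exact ncard_image_le (hs.image f)

theorem Equiv.Perm.apply_apply_of_mul_self {X : Type*} {π : Perm X} (h : π * π = 1) (x : X) :
    π (π x) = x := by
  rw [← Perm.mul_apply, h, Perm.one_apply]

section Orbits

variable {X : Type*} {S T : Set (Perm X)} {x y : X}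

theorem mem_orbSet_iff : y ∈ orbSet S x ↔ ∃ g ∈ Subgroup.closure S, g x = y := by
  simp [orbSet, MulAction.mem_orbit_iff, Subgroup.smul_def, Perm.smul_def]

theorem mem_orbSet_self : x ∈ orbSet S x :=
  mem_orbit_self x

theorem apply_mem_orbSet {g : Perm X} (hg : g ∈ Subgroup.closure S) (hy : y ∈ orbSet S x) :
    g y ∈ orbSet S x := by
  obtain ⟨h, hh, rfl⟩ := mem_orbSet_iff.1 hy
  exact mem_orbSet_iff.2 ⟨g * h, mul_mem hg hh, rfl⟩

theorem apply_mem_orbSet_of_mem {g : Perm X} (hg : g ∈ S) (hy : y ∈ orbSet S x) :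
    g y ∈ orbSet S x :=
  apply_mem_orbSet (Subgroup.subset_closure hg) hy

theorem orbSet_eq_of_mem (hy : y ∈ orbSet S x) : orbSet S y = orbSet S x :=
  orbit_eq_iff.2 hy

theorem orbSet_mono (h : S ⊆ T) : orbSet S x ⊆ orbSet T x := fun y hy => by
  obtain ⟨g, hg, rfl⟩ := mem_orbSet_iff.1 hy
  exact mem_orbSet_iff.2 ⟨g, Subgroup.closure_mono h hg, rfl⟩

theorem orbSet_subset_of_mapsTo [Finite X] {U : Set X} (hU : ∀ g ∈ S, MapsTo g U U)
    (hx : x ∈ U) : orbSet S x ⊆ U := fun y hy => by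
  obtain ⟨g, hg, rfl⟩ := mem_orbSet_iff.1 hy
  clear hy
  rw [← Subgroup.mem_toSubmonoid, Subgroup.closure_toSubmonoid_of_finite] at hg
  suffices MapsTo g U U from this hx
  induction hg using Submonoid.closure_induction with
  | mem g hg => exact hU g hg
  | one => exact mapsTo_id U
  | mul g h _ _ hg hh => exact hg.comp hh

def orbClass (S : Set (Perm X)) (x : X) : orbitRel.Quotient (Subgroup.closure S) X :=
  Quotient.mk _ x

theorem orbClass_eq_iff : orbClass S y = orbClass S x ↔ y ∈ orbSet S x :=
  Quotient.eq.trans orbitRel_apply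

theorem orbClass_surjective : Function.Surjective (orbClass S) :=
  Quotient.mk_surjective

theorem orbCount_eq_ncard_add_ncard [Finite X] (S : Set (Perm X)) (U : Set X) :
    orbCount S = (orbClass S '' U).ncard +
      (orbClass S '' {y | ∀ z ∈ orbSet S y, z ∉ U}).ncard := by
  have hcompl : orbClass S '' {y | ∀ z ∈ orbSet S y, z ∉ U} = (orbClass S '' U)ᶜ := by
    ext c
    obtain ⟨y, rfl⟩ := orbClass_surjective c
    simp only [mem_image, mem_compl_iff, mem_ofPred_eq, orbClass_eq_iff, not_exists, not_and]
    constructor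
    · rintro ⟨u, hu, huy⟩ z hz hzy
      exact hu z (orbSet_eq_of_mem huy ▸ hzy) hz
    · exact fun h => ⟨y, fun z hz hzU => h z hzU hz, mem_orbSet_self⟩
  rw [hcompl, ncard_add_ncard_compl]
  rfl

theorem ncard_image_orbClass_le_two [Finite X] {U : Set X} {a b : X}
    (h : U ⊆ orbSet S a ∪ orbSet S b) : (orbClass S '' U).ncard ≤ 2 := by
  have hsub : orbClass S '' U ⊆ {orbClass S a, orbClass S b} := by
    rintro _ ⟨y, hy, rfl⟩
    rcases h hy with hy | hy
    · exact Or.inl (orbClass_eq_iff.2 hy)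
    · exact Or.inr (orbClass_eq_iff.2 hy)
  exact (ncard_le_ncard hsub).trans ((ncard_insert_le _ _).trans (by simp))

theorem ncard_image_orbClass_le_one [Finite X] {U : Set X} {a : X} (h : U ⊆ orbSet S a) :
    (orbClass S '' U).ncard ≤ 1 := by
  refine (ncard_le_one).2 ?_
  rintro _ ⟨y, hy, rfl⟩ _ ⟨z, hz, rfl⟩
  exact (orbClass_eq_iff.2 (h hy)).trans (orbClass_eq_iff.2 (h hz)).symm

theorem one_le_ncard_image_orbClass [Finite X] {U : Set X} (hU : U.Nonempty) :
    1 ≤ (orbClass S '' U).ncard :=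
  (ncard_pos).2 (hU.image _)

end Orbits

section Restriction

variable {F : Type*} [Finite F] {e : Set F} {S : Set (Perm F)}
  {S₀ : Set (Perm {f : F // f ∉ e})} {B : Set {f : F // f ∉ e}}

theorem orbSet_val_eq_image (hS : ∀ g ∈ S, ∃ g₀ ∈ S₀, ∀ p ∉ B, (g₀ p : F) = g p)
    (hS₀ : ∀ g₀ ∈ S₀, ∃ g ∈ S, ∀ p ∉ B, (g₀ p : F) = g p) {p : {f : F // f ∉ e}}
    (hp : ∀ q ∈ orbSet S₀ p, q ∉ B) : orbSet S p = Subtype.val '' orbSet S₀ p := by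
  refine Subset.antisymm (orbSet_subset_of_mapsTo ?_ ⟨p, mem_orbSet_self, rfl⟩) ?_
  · rintro g hg _ ⟨q, hq, rfl⟩
    obtain ⟨g₀, hg₀, hagree⟩ := hS g hg
    exact ⟨g₀ q, apply_mem_orbSet_of_mem hg₀ hq, hagree q (hp q hq)⟩
  · have hsub : orbSet S₀ p ⊆ {q | q ∈ orbSet S₀ p ∧ (q : F) ∈ orbSet S p} := by
      refine orbSet_subset_of_mapsTo ?_ ⟨mem_orbSet_self, mem_orbSet_self⟩
      rintro g₀ hg₀ q ⟨hq, hqS⟩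
      obtain ⟨g, hg, hagree⟩ := hS₀ g₀ hg₀
      refine ⟨apply_mem_orbSet_of_mem hg₀ hq, ?_⟩
      rw [hagree q (hp q hq)]
      exact apply_mem_orbSet_of_mem hg hqS
    rintro _ ⟨q, hq, rfl⟩
    exact (hsub hq).2

theorem forall_orbSet_notMem_of_forall_orbSet_val_notMem
    (hS₀ : ∀ g₀ ∈ S₀, ∃ g ∈ S, ∀ p ∉ B, (g₀ p : F) = g p)
    (hB : ∀ p ∈ B, ∃ y ∈ orbSet S p, y ∈ e) {p : {f : F // f ∉ e}}
    (hp : ∀ y ∈ orbSet S p, y ∉ e) : ∀ q ∈ orbSet S₀ p, q ∉ B := by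
  have hgood : ∀ q : {f : F // f ∉ e}, (q : F) ∈ orbSet S p → q ∉ B := fun q hq hqB => by
    obtain ⟨y, hy, hye⟩ := hB q hqB
    exact hp y (orbSet_eq_of_mem hq ▸ hy) hye
  have hsub : orbSet S₀ p ⊆ {q | (q : F) ∈ orbSet S p} := by
    refine orbSet_subset_of_mapsTo ?_ mem_orbSet_self
    intro g₀ hg₀ q hq
    obtain ⟨g, hg, hagree⟩ := hS₀ g₀ hg₀
    rw [mem_ofPred_eq, hagree q (hgood q hq)]
    exact apply_mem_orbSet_of_mem hg hq
  exact fun q hq => hgood q (hsub hq)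

/-- `B` holds the points where the generators in `S₀` may differ from those in `S`; the orbits
avoiding `e` upstairs correspond to the orbits avoiding `B` downstairs. -/
theorem orbCount_add_ncard_eq (hS : ∀ g ∈ S, ∃ g₀ ∈ S₀, ∀ p ∉ B, (g₀ p : F) = g p)
    (hS₀ : ∀ g₀ ∈ S₀, ∃ g ∈ S, ∀ p ∉ B, (g₀ p : F) = g p)
    (hB : ∀ p ∈ B, ∃ y ∈ orbSet S p, y ∈ e) :
    orbCount S + (orbClass S₀ '' B).ncard = orbCount S₀ + (orbClass S '' e).ncard := by
  rw [orbCount_eq_ncard_add_ncard S e, orbCount_eq_ncard_add_ncard S₀ B]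
  set U := {y | ∀ z ∈ orbSet S y, z ∉ e}
  set U₀ := {p | ∀ q ∈ orbSet S₀ p, q ∉ B}
  have hU : U = Subtype.val '' U₀ := by
    ext y
    refine ⟨fun hy => ?_, ?_⟩
    · have hye : y ∉ e := hy y mem_orbSet_self
      exact ⟨⟨y, hye⟩, forall_orbSet_notMem_of_forall_orbSet_val_notMem hS₀ hB hy, rfl⟩
    · rintro ⟨p, hp, rfl⟩ z hz
      rw [orbSet_val_eq_image hS hS₀ hp] at hz
      obtain ⟨q, -, rfl⟩ := hz
      exact q.2
  have hfiber : ∀ p ∈ U₀, ∀ q ∈ U₀,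
      orbClass S (p : F) = orbClass S q ↔ orbClass S₀ p = orbClass S₀ q := by
    intro p _ q hq
    rw [orbClass_eq_iff, orbClass_eq_iff, orbSet_val_eq_image hS hS₀ hq,
      Subtype.val_injective.mem_set_image]
  have hcount : (orbClass S '' U).ncard = (orbClass S₀ '' U₀).ncard := by
    rw [hU, image_image]
    exact le_antisymm (ncard_image_le_of_fiber (toFinite _) fun p hp q hq => (hfiber p hp q hq).2)
      (ncard_image_le_of_fiber (toFinite _) fun p hp q hq => (hfiber p hp q hq).1)
  omega

end Restriction

theorem exists_pow_of_mem_orbSet_pair {X : Type*} [Finite X] {σ φ : Perm X} (hσ : σ * σ = 1)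
    (hφ : φ * φ = 1) {y z : X} (hy : y ∈ orbSet {σ, φ} z) :
    ∃ n : ℕ, y = ((σ * φ) ^ n) z ∨ y = ((σ * φ) ^ n) (σ z) := by
  set ρ := σ * φ with hρ
  have hσinv : σ⁻¹ = σ := inv_eq_of_mul_eq_one_right hσ
  have hφρ : φ = σ * ρ := by rw [hρ, ← mul_assoc, hσ, one_mul]
  have hreflect : ∀ g ∈ Subgroup.zpowers ρ, σ * g = g⁻¹ * σ := by
    rintro _ ⟨k, rfl⟩
    have hconj : σ * ρ * σ⁻¹ = ρ⁻¹ := by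
      rw [hσinv, hρ, mul_inv_rev, inv_eq_of_mul_eq_one_right hφ, hσinv, ← mul_assoc, hσ, one_mul]
    calc σ * ρ ^ k = (σ * ρ * σ⁻¹) ^ k * σ := by rw [conj_zpow, inv_mul_cancel_right]
      _ = (ρ ^ k)⁻¹ * σ := by rw [hconj, inv_zpow]
  set U := {w | ∃ g ∈ Subgroup.zpowers ρ, w = g z ∨ w = g (σ z)}
  have hσU : MapsTo σ U U := by
    rintro _ ⟨g, hg, rfl | rfl⟩
    · refine ⟨g⁻¹, inv_mem hg, Or.inr ?_⟩
      rw [← Perm.mul_apply, hreflect g hg, Perm.mul_apply]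
    · refine ⟨g⁻¹, inv_mem hg, Or.inl ?_⟩
      rw [← Perm.mul_apply, hreflect g hg, Perm.mul_apply, Perm.apply_apply_of_mul_self hσ]
  have hρU : MapsTo ρ U U := by
    rintro _ ⟨g, hg, rfl | rfl⟩
    exacts [⟨ρ * g, mul_mem (Subgroup.mem_zpowers ρ) hg, Or.inl rfl⟩,
      ⟨ρ * g, mul_mem (Subgroup.mem_zpowers ρ) hg, Or.inr rfl⟩]
  have hgen : ∀ g ∈ ({σ, φ} : Set (Perm X)), MapsTo g U U := by
    rintro g (rfl | rfl)
    · exact hσU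
    · rw [hφρ]; exact hσU.comp hρU
  obtain ⟨g, hg, hyg⟩ := orbSet_subset_of_mapsTo hgen ⟨1, one_mem _, Or.inl rfl⟩ hy
  obtain ⟨n, rfl⟩ := mem_powers_iff_mem_zpowers.2 hg
  exact ⟨n, hyg⟩

theorem exists_pow_eq_of_firstReturn {F : Type*} {e : Set F} {ρ : Perm F}
    {ρ₀ : Perm {f : F // f ∉ e}}
    (h : ∀ p, ∃ m, (ρ₀ p : F) = (ρ ^ (m + 1)) p ∧ ∀ i < m, (ρ ^ (i + 1)) (p : F) ∈ e)
    (n : ℕ) {p q : {f : F // f ∉ e}} (hq : (ρ ^ n) (p : F) = q) : ∃ k : ℕ, (ρ₀ ^ k) p = q := by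
  induction n using Nat.strong_induction_on generalizing p with
  | _ n ih =>
  rcases Nat.eq_zero_or_pos n with rfl | hn
  · exact ⟨0, Subtype.ext (by simpa using hq)⟩
  obtain ⟨m, hm, hskip⟩ := h p
  have hmn : m + 1 ≤ n := by
    by_contra hlt
    obtain ⟨i, rfl⟩ : ∃ i, n = i + 1 := ⟨n - 1, by omega⟩
    exact q.2 (hq ▸ hskip i (by omega))
  obtain ⟨k, hk⟩ := ih (n - (m + 1)) (by omega) (p := ρ₀ p) (by
    rw [hm, ← Perm.mul_apply, ← pow_add, Nat.sub_add_cancel hmn, hq])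
  exact ⟨k + 1, by rw [pow_succ, Perm.mul_apply, hk]⟩

namespace IsEdgeDeletion

variable {F : Type*} {θ σ φ : Perm F} {e : Set F} {θ₀ σ₀ φ₀ : Perm {f : F // f ∉ e}}

theorem val_θ₀ (hdel : IsEdgeDeletion σ φ e θ₀ σ₀ φ₀ θ) (a : {f : F // f ∉ e}) :
    (θ₀ a : F) = θ a :=
  (hdel.1 a).1

theorem val_σ₀ (hdel : IsEdgeDeletion σ φ e θ₀ σ₀ φ₀ θ) (a : {f : F // f ∉ e}) :
    (σ₀ a : F) = σ a :=
  (hdel.1 a).2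

theorem val_φ₀_eq (hdel : IsEdgeDeletion σ φ e θ₀ σ₀ φ₀ θ) {a : {f : F // f ∉ e}} {m : ℕ}
    (hm : ((φ * σ) ^ m) (φ a) ∉ e) (hlt : ∀ j < m, ((φ * σ) ^ j) (φ a) ∈ e) :
    (φ₀ a : F) = ((φ * σ) ^ m) (φ a) := by
  obtain ⟨m', hm', hlt', heq⟩ := hdel.2 a
  obtain rfl : m' = m :=
    le_antisymm (not_lt.1 fun h => hm (hlt' m h)) (not_lt.1 fun h => hm' (hlt m' h))
  exact heq

theorem val_φ₀_of_notMem (hdel : IsEdgeDeletion σ φ e θ₀ σ₀ φ₀ θ) {a : {f : F // f ∉ e}}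
    (ha : φ a ∉ e) : (φ₀ a : F) = φ a := by
  simpa using hdel.val_φ₀_eq (m := 0) (by simpa using ha) (by simp)

theorem φ₀_eq_of_mem (hdel : IsEdgeDeletion σ φ e θ₀ σ₀ φ₀ θ) (hφ : φ * φ = 1) {y : F}
    (hy : y ∈ e) {p q : {f : F // f ∉ e}} (hp : (p : F) = φ y) (hq : (q : F) = φ (σ y)) :
    φ₀ p = q := by
  have hφp : φ p = y := by rw [hp, Perm.apply_apply_of_mul_self hφ]
  apply Subtype.ext
  rw [hdel.val_φ₀_eq (m := 1) (by simpa [hφp, ← hq] using q.2) (by simpa [hφp] using hy), hφp,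
    hq, pow_one, Perm.mul_apply]

theorem exists_val_σ₀_φ₀_eq_pow (hdel : IsEdgeDeletion σ φ e θ₀ σ₀ φ₀ θ)
    (hσe : ∀ y ∈ e, σ y ∈ e) (p : {f : F // f ∉ e}) :
    ∃ m, ((σ₀ * φ₀) p : F) = ((σ * φ) ^ (m + 1)) p ∧ ∀ i < m, ((σ * φ) ^ (i + 1)) (p : F) ∈ e := by
  obtain ⟨m, -, hlt, heq⟩ := hdel.2 p
  have hpow : ∀ i, ((σ * φ) ^ (i + 1)) (p : F) = σ (((φ * σ) ^ i) (φ p)) := fun i => by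
    rw [pow_succ', mul_assoc, ← mul_pow_mul, ← mul_assoc, Perm.mul_apply, Perm.mul_apply]
  refine ⟨m, ?_, fun i hi => ?_⟩
  · rw [Perm.mul_apply, hdel.val_σ₀, heq, hpow]
  · rw [hpow]
    exact hσe _ (hlt i hi)

theorem mem_orbSet_of_val_mem_orbSet [Finite F] (hdel : IsEdgeDeletion σ φ e θ₀ σ₀ φ₀ θ)
    (hσ : σ * σ = 1) (hφ : φ * φ = 1) (hσe : ∀ y ∈ e, σ y ∈ e) {p q : {f : F // f ∉ e}}
    (h : (q : F) ∈ orbSet {σ, φ} p) : q ∈ orbSet {σ₀, φ₀} p := by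
  have hρ₀ : σ₀ * φ₀ ∈ Subgroup.closure {σ₀, φ₀} :=
    mul_mem (Subgroup.subset_closure (by simp)) (Subgroup.subset_closure (by simp))
  have hlift : ∀ (n : ℕ) (r : {f : F // f ∉ e}), ((σ * φ) ^ n) (r : F) = q →
      r ∈ orbSet {σ₀, φ₀} p → q ∈ orbSet {σ₀, φ₀} p := by
    intro n r hr hrp
    obtain ⟨k, rfl⟩ := exists_pow_eq_of_firstReturn (hdel.exists_val_σ₀_φ₀_eq_pow hσe) n hr
    exact apply_mem_orbSet (pow_mem hρ₀ k) hrp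
  obtain ⟨n, hn | hn⟩ := exists_pow_of_mem_orbSet_pair hσ hφ h
  · exact hlift n p hn.symm mem_orbSet_self
  · exact hlift n (σ₀ p) (by rw [hdel.val_σ₀]; exact hn.symm)
      (apply_mem_orbSet_of_mem (by simp) mem_orbSet_self)

end IsEdgeDeletion

section GraphEmbedding

variable {X : Type*} [Finite X] {θ σ : Perm X} {x : X}

theorem comm_of_card_orbSet_eq_four (hθ : FPF θ) (hσ : FPF σ)
    (h : Nat.card (orbSet {θ, σ} x) = 4) : θ (σ x) = σ (θ x) := by
  have hθθ := Perm.apply_apply_of_mul_self hθ.1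
  have hσσ := Perm.apply_apply_of_mul_self hσ.1
  have hO : (orbSet {θ, σ} x).ncard = 4 := by rwa [← Nat.card_coe_set_eq]
  have hxO : x ∈ orbSet {θ, σ} x := mem_orbSet_self
  have hθO : ∀ {y}, y ∈ orbSet {θ, σ} x → θ y ∈ orbSet {θ, σ} x :=
    apply_mem_orbSet_of_mem (by simp)
  have hσO : ∀ {y}, y ∈ orbSet {θ, σ} x → σ y ∈ orbSet {θ, σ} x :=
    apply_mem_orbSet_of_mem (by simp)
  have hne : θ x ≠ σ x := by
    intro heq
    have hsub : orbSet {θ, σ} x ⊆ {x, θ x} := by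
      refine orbSet_subset_of_mapsTo ?_ (by simp)
      rintro g (rfl | rfl) y (rfl | rfl)
      · simp
      · simp [hθθ]
      · simp [← heq]
      · simp [heq, hσσ]
    have := (ncard_le_ncard hsub).trans (ncard_insert_le x {θ x})
    rw [ncard_singleton] at this
    omega
  have hxθ : x ≠ θ x := (hθ.2 x).symm
  have hxσθ : x ≠ σ (θ x) := fun h => hne (by rw [← hσσ (θ x), ← h])
  have h4 : ({x, θ x, σ x, σ (θ x)} : Set X).ncard = 4 := by
    rw [ncard_insert_of_notMem, ncard_insert_of_notMem, ncard_pair]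
    all_goals simp [hxθ, (hσ.2 x).symm, hxσθ, hne, (hσ.2 (θ x)).symm, σ.injective.ne hxθ]
  have hT : ({x, θ x, σ x, σ (θ x)} : Set X) = orbSet {θ, σ} x :=
    eq_of_subset_of_ncard_le
      (by simp [insert_subset_iff, hxO, hθO hxO, hσO hxO, hσO (hθO hxO)]) (by rw [hO, h4])
  have hθσ : θ (σ x) ∈ ({x, θ x, σ x, σ (θ x)} : Set X) := hT ▸ hθO (hσO hxO)
  rcases hθσ with h | h | h | h
  · exact absurd (θ.injective (h.trans (hθθ x).symm)) hne.symm
  · exact absurd (θ.injective h) (hσ.2 x)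
  · exact absurd h (hθ.2 (σ x))
  · exact h

theorem orbSet_pair_subset (hθ : θ * θ = 1) (hσ : σ * σ = 1) (hc : θ (σ x) = σ (θ x)) :
    orbSet {θ, σ} x ⊆ {x, θ x, σ x, σ (θ x)} := by
  have hθθ := Perm.apply_apply_of_mul_self hθ
  have hσσ := Perm.apply_apply_of_mul_self hσ
  refine orbSet_subset_of_mapsTo ?_ (by simp)
  rintro g (rfl | rfl) y (rfl | rfl | rfl | rfl)
  · simp
  · simp [hθθ]
  · simp [hc]
  · simp [← hc, hθθ]
  all_goals simp [hσσ]

end GraphEmbedding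

namespace IsEdgeDeletion

variable {F : Type*} [Finite F] {θ σ φ : Perm F} {e : Set F}
  {θ₀ σ₀ φ₀ : Perm {f : F // f ∉ e}} {x : F}

theorem ncard_image_orbClass_apply_mem_le_two (hdel : IsEdgeDeletion σ φ e θ₀ σ₀ φ₀ θ)
    (hφ : φ * φ = 1) {S₀ : Set (Perm {f : F // f ∉ e})} (hφ₀ : φ₀ ∈ S₀) (hx : x ∈ e)
    (hθx : θ x ∈ e) (he : e ⊆ {x, θ x, σ x, σ (θ x)}) :
    (orbClass S₀ '' {p | φ p ∈ e}).ncard ≤ 2 := by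
  have hpair : ∀ y ∈ e, (orbClass S₀ '' {p | (p : F) = φ y ∨ (p : F) = φ (σ y)}).ncard ≤ 1 := by
    intro y hy
    have hstep : ∀ p q : {f : F // f ∉ e}, (p : F) = φ y → (q : F) = φ (σ y) →
        orbClass S₀ p = orbClass S₀ q := fun p q hp hq =>
      (orbClass_eq_iff.2 (hdel.φ₀_eq_of_mem hφ hy hp hq ▸
        apply_mem_orbSet_of_mem hφ₀ mem_orbSet_self)).symm
    refine (ncard_le_one (toFinite _)).2 ?_
    rintro _ ⟨p, hp, rfl⟩ _ ⟨q, hq, rfl⟩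
    rcases hp with hp | hp <;> rcases hq with hq | hq
    · rw [Subtype.ext (hp.trans hq.symm)]
    · exact hstep p q hp hq
    · exact (hstep q p hq hp).symm
    · rw [Subtype.ext (hp.trans hq.symm)]
  have hcover : {p : {f : F // f ∉ e} | φ p ∈ e} ⊆
      {p | (p : F) = φ x ∨ (p : F) = φ (σ x)} ∪
        {p | (p : F) = φ (θ x) ∨ (p : F) = φ (σ (θ x))} := by
    intro p hp
    have hpφ : (p : F) = φ (φ p) := (Perm.apply_apply_of_mul_self hφ p).symm
    rcases he hp with h | h | h | h <;> rw [h] at hpφ <;> simp [hpφ]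
  calc (orbClass S₀ '' {p | φ p ∈ e}).ncard
      ≤ (orbClass S₀ '' {p | (p : F) = φ x ∨ (p : F) = φ (σ x)}).ncard +
        (orbClass S₀ '' {p | (p : F) = φ (θ x) ∨ (p : F) = φ (σ (θ x))}).ncard := by
        refine (ncard_le_ncard (image_mono hcover)).trans ?_
        rw [image_union]
        exact ncard_union_le _ _
    _ ≤ 2 := add_le_add (hpair x hx) (hpair (θ x) hθx)

theorem orbCount_edges (hdel : IsEdgeDeletion σ φ e θ₀ σ₀ φ₀ θ) (he : e = orbSet {θ, σ} x) :
    (orbCount {θ, σ} : ℤ) - orbCount {θ₀, σ₀} = 1 := by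
  have hcount := orbCount_add_ncard_eq (S := {θ, σ}) (S₀ := {θ₀, σ₀}) (B := ∅)
    (by simp [hdel.val_θ₀, hdel.val_σ₀]) (by simp [hdel.val_θ₀, hdel.val_σ₀]) (by simp)
  have he1 : (orbClass {θ, σ} '' e).ncard = 1 :=
    le_antisymm (ncard_image_orbClass_le_one he.le)
      (one_le_ncard_image_orbClass ⟨x, he ▸ mem_orbSet_self⟩)
  rw [image_empty, ncard_empty, he1] at hcount
  omega

theorem orbCount_vertices (hdel : IsEdgeDeletion σ φ e θ₀ σ₀ φ₀ θ) (hσ : σ * σ = 1)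
    (hφ : φ * φ = 1) (hσe : ∀ y ∈ e, σ y ∈ e) (hx : x ∈ e)
    (he : e ⊆ orbSet {σ, φ} x ∪ orbSet {σ, φ} (θ x)) :
    (orbCount {σ, φ} : ℤ) - orbCount {σ₀, φ₀} ∈ ({0, 1, 2} : Set ℤ) := by
  have hφS : ∀ {y}, φ y ∈ orbSet {σ, φ} y := apply_mem_orbSet_of_mem (by simp) mem_orbSet_self
  have hcount := orbCount_add_ncard_eq (S := {σ, φ}) (S₀ := {σ₀, φ₀}) (B := {p | φ p ∈ e})
    (by simp +contextual [hdel.val_σ₀, hdel.val_φ₀_of_notMem])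
    (by simp +contextual [hdel.val_σ₀, hdel.val_φ₀_of_notMem])
    (fun p hp => ⟨φ p, hφS, hp⟩)
  have hlift : (orbClass {σ₀, φ₀} '' {p | φ p ∈ e}).ncard ≤ (orbClass {σ, φ} '' e).ncard := by
    refine (ncard_image_le_of_fiber (f := fun p : {f : F // f ∉ e} => orbClass {σ, φ} (p : F))
      (toFinite _) fun p _ q _ hpq => orbClass_eq_iff.2
        (hdel.mem_orbSet_of_val_mem_orbSet hσ hφ hσe (orbClass_eq_iff.1 hpq))).trans ?_
    refine ncard_le_ncard ?_
    rintro _ ⟨p, hp, rfl⟩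
    exact ⟨φ p, hp, orbClass_eq_iff.2 hφS⟩
  have h1 := one_le_ncard_image_orbClass (S := {σ, φ}) ⟨x, hx⟩
  have h2 := ncard_image_orbClass_le_two he
  simp only [mem_insert_iff, mem_singleton_iff]
  omega

theorem orbCount_faces (hdel : IsEdgeDeletion σ φ e θ₀ σ₀ φ₀ θ) (hφ : φ * φ = 1) (hx : x ∈ e)
    (hθx : θ x ∈ e) (he : e ⊆ {x, θ x, σ x, σ (θ x)}) (hc : θ (σ x) = σ (θ x)) :
    (orbCount {θ, φ} : ℤ) - orbCount {θ₀, φ₀} ∈ ({-1, 0, 1, 2} : Set ℤ) := by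
  have hcount := orbCount_add_ncard_eq (S := {θ, φ}) (S₀ := {θ₀, φ₀}) (B := {p | φ p ∈ e})
    (by simp +contextual [hdel.val_θ₀, hdel.val_φ₀_of_notMem])
    (by simp +contextual [hdel.val_θ₀, hdel.val_φ₀_of_notMem])
    (fun p hp => ⟨φ p, apply_mem_orbSet_of_mem (by simp) mem_orbSet_self, hp⟩)
  have hcover : e ⊆ orbSet {θ, φ} x ∪ orbSet {θ, φ} (σ x) := by
    have hθS : ∀ {y}, θ y ∈ orbSet {θ, φ} y := apply_mem_orbSet_of_mem (by simp) mem_orbSet_self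
    refine he.trans ?_
    simp only [insert_subset_iff, singleton_subset_iff, mem_union]
    exact ⟨Or.inl mem_orbSet_self, Or.inl hθS, Or.inr mem_orbSet_self, Or.inr (hc ▸ hθS)⟩
  have h1 := one_le_ncard_image_orbClass (S := {θ, φ}) ⟨x, hx⟩
  have h2 := ncard_image_orbClass_le_two hcover
  have h3 := hdel.ncard_image_orbClass_apply_mem_le_two hφ (S₀ := {θ₀, φ₀}) (by simp) hx hθx he
  simp only [mem_insert_iff, mem_singleton_iff]
  omega

theorem orbCount_components (hdel : IsEdgeDeletion σ φ e θ₀ σ₀ φ₀ θ) (hφ : φ * φ = 1)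
    (he : e = orbSet {θ, σ} x) (hθx : θ x ∈ e) (he4 : e ⊆ {x, θ x, σ x, σ (θ x)}) :
    (orbCount {θ, σ, φ} : ℤ) - orbCount {θ₀, σ₀, φ₀} ∈ ({-1, 0, 1} : Set ℤ) := by
  have hcount := orbCount_add_ncard_eq (S := {θ, σ, φ}) (S₀ := {θ₀, σ₀, φ₀})
    (B := {p | φ p ∈ e}) (by simp +contextual [hdel.val_θ₀, hdel.val_σ₀, hdel.val_φ₀_of_notMem])
    (by simp +contextual [hdel.val_θ₀, hdel.val_σ₀, hdel.val_φ₀_of_notMem])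
    (fun p hp => ⟨φ p, apply_mem_orbSet_of_mem (by simp) mem_orbSet_self, hp⟩)
  have hx : x ∈ e := he ▸ mem_orbSet_self
  have h1 := one_le_ncard_image_orbClass (S := {θ, σ, φ}) ⟨x, hx⟩
  have h2 := ncard_image_orbClass_le_one (S := {θ, σ, φ})
    (he.trans_subset (orbSet_mono (by simp [insert_subset_iff])))
  have h3 := hdel.ncard_image_orbClass_apply_mem_le_two hφ (S₀ := {θ₀, σ₀, φ₀}) (by simp) hx hθx he4
  simp only [mem_insert_iff, mem_singleton_iff]
  omega

end IsEdgeDeletion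

theorem stmt9 {F : Type*} [Fintype F]
    (θ σ' φ' : Equiv.Perm F) (h : IsGraphEmb θ σ' φ') (x : F)
    (e : Set F) (he : e = orbSet {θ, σ'} x)
    (θ₀ σ₀ φ₀ : Equiv.Perm {f : F // f ∉ e})
    (hdel : IsEdgeDeletion σ' φ' e θ₀ σ₀ φ₀ θ) :
    (orbCount {θ, σ'} : ℤ) - orbCount {θ₀, σ₀} = 1 ∧
    (orbCount {σ', φ'} : ℤ) - orbCount {σ₀, φ₀} ∈ ({0, 1, 2} : Set ℤ) ∧
    (orbCount {θ, φ'} : ℤ) - orbCount {θ₀, φ₀} ∈ ({-1, 0, 1, 2} : Set ℤ) ∧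
    (orbCount {θ, σ', φ'} : ℤ) - orbCount {θ₀, σ₀, φ₀} ∈ ({-1, 0, 1} : Set ℤ) := by
  obtain ⟨hθ, hσ, hφ, hcard⟩ := h
  have hc := comm_of_card_orbSet_eq_four hθ hσ (hcard x)
  have he4 : e ⊆ {x, θ x, σ' x, σ' (θ x)} := he ▸ orbSet_pair_subset hθ.1 hσ.1 hc
  have hx : x ∈ e := he ▸ mem_orbSet_self
  have hθx : θ x ∈ e := he ▸ apply_mem_orbSet_of_mem (by simp) mem_orbSet_self
  have hσe : ∀ y ∈ e, σ' y ∈ e := he ▸ fun y => apply_mem_orbSet_of_mem (by simp)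
  have hvertex : e ⊆ orbSet {σ', φ'} x ∪ orbSet {σ', φ'} (θ x) := by
    have hσS : ∀ {y}, σ' y ∈ orbSet {σ', φ'} y :=
      apply_mem_orbSet_of_mem (by simp) mem_orbSet_self
    refine he4.trans ?_
    simp only [insert_subset_iff, singleton_subset_iff, mem_union]
    exact ⟨Or.inl mem_orbSet_self, Or.inr mem_orbSet_self, Or.inl hσS, Or.inr hσS⟩
  exact ⟨hdel.orbCount_edges he, hdel.orbCount_vertices hσ.1 hφ.1 hσe hx hvertex,
    hdel.orbCount_faces hφ.1 hx hθx he4 hc, hdel.orbCount_components hφ.1 he hθx he4⟩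
end
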